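/- arXiv:1809.06994 — 3 statements merged into one kernel-verified Lean document; each statement's English description precedes it below -/
import Mathlib

section
/- Let N ≥ 1. There is a constant C = C(N) > 0 such that for every compactly supported u ∈ H^1(ℝ^N), ‖u‖_{L^2} ≤ C ‖∇u‖_{L^2}^{3/4} ‖|x|^3 u‖_{L^2}^{1/4}. -/
/-!
Integrating by parts against the Euler field `x ↦ x` gives, for every `k`,
`(N + 2k) ‖|x|ᵏ u‖² = -∫ |x|²ᵏ x · ∇(u²) ≤ 2 ‖|x|²ᵏ⁺¹ u‖ ‖∇u‖` by Cauchy–Schwarz.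
For `k = 0` and `k = 1` this reads `‖u‖² ≤ 2 ‖|x| u‖ ‖∇u‖` and `‖|x| u‖² ≤ 2 ‖|x|³ u‖ ‖∇u‖`;
substituting the second into the first gives `‖u‖⁴ ≤ 8 ‖|x|³ u‖ ‖∇u‖³`.
-/

open MeasureTheory

theorem integral_mul_le_L2_mul_L2_of_nonneg {α : Type*} [MeasurableSpace α] {μ : Measure α}
    {f g : α → ℝ} (hf : MemLp f 2 μ) (hg : MemLp g 2 μ) (hf0 : 0 ≤ f) (hg0 : 0 ≤ g) :
    ∫ x, f x * g x ∂μ ≤ (∫ x, f x ^ 2 ∂μ) ^ ((1:ℝ)/2) * (∫ x, g x ^ 2 ∂μ) ^ ((1:ℝ)/2) := by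
  simpa [Real.rpow_two] using integral_mul_le_Lp_mul_Lq_of_nonneg Real.HolderConjugate.two_two
    (ae_of_all _ hf0) (ae_of_all _ hg0) (by simpa using hf) (by simpa using hg)

theorem fderiv_norm_pow_two_mul_apply_self {E : Type*} [NormedAddCommGroup E]
    [InnerProductSpace ℝ E] (k : ℕ) (x : E) :
    fderiv ℝ (fun y => ‖y‖ ^ (2 * k)) x x = 2 * k * ‖x‖ ^ (2 * k) := by
  simp_rw [pow_mul]
  rw [((hasStrictFDerivAt_norm_sq x).hasFDerivAt.pow k).fderiv]
  cases k with
  | zero => simp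
  | succ k =>
    simp only [add_tsub_cancel_right, nsmul_eq_mul, smul_apply, coe_innerSL_apply,
      real_inner_self_eq_norm_sq, smul_eq_mul]
    push_cast
    ring

theorem abs_norm_pow_mul_two_mul_mul_apply_le {E : Type*} [NormedAddCommGroup E]
    [NormedSpace ℝ E] (L : E →L[ℝ] ℝ) (a : ℝ) (x : E) (n : ℕ) :
    |‖x‖ ^ n * (2 * a * L x)| ≤ 2 * (‖x‖ ^ (n + 1) * |a| * ‖L‖) :=
  calc |‖x‖ ^ n * (2 * a * L x)| = 2 * (‖x‖ ^ n * |a|) * |L x| := by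
        rw [abs_mul, abs_mul, abs_mul, abs_two, abs_of_nonneg (by positivity)]
        ring
    _ ≤ 2 * (‖x‖ ^ n * |a|) * (‖L‖ * ‖x‖) := by
        gcongr
        exact L.le_opNorm x
    _ = 2 * (‖x‖ ^ (n + 1) * |a| * ‖L‖) := by ring

section

variable {ι : Type*} [Fintype ι]

theorem ContinuousLinearMap.apply_eq_sum_mul_basisFun (L : EuclideanSpace ℝ ι →L[ℝ] ℝ)
    (x : EuclideanSpace ℝ ι) :
    L x = ∑ i, x i * L (EuclideanSpace.basisFun ι ℝ i) := by
  conv_lhs => rw [← (EuclideanSpace.basisFun ι ℝ).sum_repr x]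
  simp [map_sum]

variable {w g : EuclideanSpace ℝ ι → ℝ}

theorem integrable_mul_coord_mul_fderiv_basisFun (hw : ContDiff ℝ 1 w) (hg : ContDiff ℝ 1 g)
    (hgc : HasCompactSupport g) (i : ι) :
    Integrable fun x => w x * x i * fderiv ℝ g x (EuclideanSpace.basisFun ι ℝ i) := by
  have := hw.continuous
  have := hg.continuous_fderiv one_ne_zero
  exact (by fun_prop : Continuous _).integrable_of_hasCompactSupport
    (hgc.fderiv_apply (𝕜 := ℝ) _).mul_left

theorem integrable_fderiv_basisFun_mul_coord_add_mul (hw : ContDiff ℝ 1 w) (hg : ContDiff ℝ 1 g)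
    (hgc : HasCompactSupport g) (i : ι) :
    Integrable fun x => (fderiv ℝ w x (EuclideanSpace.basisFun ι ℝ i) * x i + w x) * g x := by
  have := hw.continuous
  have := hw.continuous_fderiv one_ne_zero
  have := hg.continuous
  exact (by fun_prop : Continuous _).integrable_of_hasCompactSupport hgc.mul_left

theorem integral_mul_coord_mul_fderiv_basisFun (hw : ContDiff ℝ 1 w) (hg : ContDiff ℝ 1 g)
    (hgc : HasCompactSupport g) (i : ι) :
    ∫ x, w x * x i * fderiv ℝ g x (EuclideanSpace.basisFun ι ℝ i) =
      -∫ x, (fderiv ℝ w x (EuclideanSpace.basisFun ι ℝ i) * x i + w x) * g x := by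
  set e := EuclideanSpace.basisFun ι ℝ
  have he : e i i = 1 := by classical simp [e]
  have hD (x) : HasFDerivAt (fun y : EuclideanSpace ℝ ι => w y * y i)
      (w x • EuclideanSpace.proj i + x i • fderiv ℝ w x) x :=
    ((hw.differentiable one_ne_zero x).hasFDerivAt).mul
      (EuclideanSpace.proj (𝕜 := ℝ) i).hasFDerivAt
  have hDe (x) : fderiv ℝ (fun y : EuclideanSpace ℝ ι => w y * y i) x (e i) =
      fderiv ℝ w x (e i) * x i + w x := by
    simp only [(hD x).fderiv, add_apply, smul_apply, EuclideanSpace.coe_proj, he, smul_eq_mul]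
    ring
  have := hw.continuous
  have := hg.continuous
  simp only [← hDe]
  refine integral_mul_fderiv_eq_neg_fderiv_mul_of_integrable (μ := volume) ?_
    (integrable_mul_coord_mul_fderiv_basisFun hw hg hgc i)
    ((by fun_prop : Continuous _).integrable_of_hasCompactSupport hgc.mul_left)
    (fun x _ => (hD x).differentiableAt) (fun x _ => hg.differentiable one_ne_zero x)
  simpa only [hDe] using integrable_fderiv_basisFun_mul_coord_add_mul hw hg hgc i

theorem integral_mul_fderiv_apply_self (hw : ContDiff ℝ 1 w) (hg : ContDiff ℝ 1 g)
    (hgc : HasCompactSupport g) :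
    ∫ x, w x * fderiv ℝ g x x = -∫ x, (Fintype.card ι * w x + fderiv ℝ w x x) * g x := by
  calc ∫ x, w x * fderiv ℝ g x x
      = ∑ i, ∫ x, w x * x i * fderiv ℝ g x (EuclideanSpace.basisFun ι ℝ i) := by
        rw [← integral_finsetSum _ fun i _ =>
          integrable_mul_coord_mul_fderiv_basisFun hw hg hgc i]
        congr with x
        rw [(fderiv ℝ g x).apply_eq_sum_mul_basisFun, Finset.mul_sum]
        simp only [mul_assoc]
    _ = ∑ i, -∫ x, (fderiv ℝ w x (EuclideanSpace.basisFun ι ℝ i) * x i + w x) * g x := by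
        simp only [integral_mul_coord_mul_fderiv_basisFun hw hg hgc]
    _ = -∫ x, (Fintype.card ι * w x + fderiv ℝ w x x) * g x := by
        rw [Finset.sum_neg_distrib, ← integral_finsetSum _ fun i _ =>
          integrable_fderiv_basisFun_mul_coord_add_mul hw hg hgc i]
        congr with x
        rw [(fderiv ℝ w x).apply_eq_sum_mul_basisFun, ← Finset.sum_mul, Finset.sum_add_distrib]
        simp only [Finset.sum_const, Finset.card_univ, nsmul_eq_mul, mul_comm]
        ring

theorem integral_norm_pow_mul_two_mul_mul_fderiv_apply_self {u : EuclideanSpace ℝ ι → ℝ}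
    (hu : ContDiff ℝ 1 u) (hcs : HasCompactSupport u) (k : ℕ) :
    ∫ x, ‖x‖ ^ (2 * k) * (2 * u x * fderiv ℝ u x x) =
      -((Fintype.card ι + 2 * k) * ∫ x, ‖x‖ ^ (2 * k) * u x ^ 2) := by
  have hDsq (x) : fderiv ℝ (fun x => u x ^ 2) x x = 2 * u x * fderiv ℝ u x x := by
    rw [fderiv_fun_pow 2 (hu.differentiable one_ne_zero x)]
    simp
  have ibp := integral_mul_fderiv_apply_self (w := fun x => ‖x‖ ^ (2 * k)) (g := fun x => u x ^ 2)
    (by simpa only [pow_mul] using (contDiff_norm_sq ℝ).pow k) (hu.pow 2)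
    (hcs.comp_left (g := (· ^ 2)) (zero_pow two_ne_zero))
  simp only [hDsq, fderiv_norm_pow_two_mul_apply_self] at ibp
  rw [ibp, ← integral_const_mul]
  congr with x
  ring

theorem weighted_heisenberg {u : EuclideanSpace ℝ ι → ℝ} (hu : ContDiff ℝ 1 u)
    (hcs : HasCompactSupport u) (k : ℕ) :
    (Fintype.card ι + 2 * k) * ∫ x, ‖x‖ ^ (2 * k) * u x ^ 2 ≤
      2 * (∫ x, ‖x‖ ^ (4 * k + 2) * u x ^ 2) ^ ((1:ℝ)/2) *
        (∫ x, ‖fderiv ℝ u x‖ ^ 2) ^ ((1:ℝ)/2) := by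
  have cu := hu.continuous
  have cDu := hu.continuous_fderiv one_ne_zero
  have supp {f : EuclideanSpace ℝ ι → ℝ} (h0 : ∀ x, u x = 0 → f x = 0) : HasCompactSupport f :=
    hcs.mono (Function.support_subset_iff'.2 fun x hx => h0 x (Function.notMem_support.1 hx))
  have cauchy_schwarz := integral_mul_le_L2_mul_L2_of_nonneg (μ := volume)
    ((by fun_prop : Continuous fun x => ‖x‖ ^ (2 * k + 1) * |u x|).memLp_of_hasCompactSupport
      (supp (by simp_all)))
    (cDu.norm.memLp_of_hasCompactSupport (hcs.fderiv (𝕜 := ℝ)).norm)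
    (fun x => by positivity) (fun x => norm_nonneg _)
  calc (Fintype.card ι + 2 * k) * ∫ x, ‖x‖ ^ (2 * k) * u x ^ 2
      = -∫ x, ‖x‖ ^ (2 * k) * (2 * u x * fderiv ℝ u x x) := by
        rw [integral_norm_pow_mul_two_mul_mul_fderiv_apply_self hu hcs, neg_neg]
    _ ≤ ∫ x, |‖x‖ ^ (2 * k) * (2 * u x * fderiv ℝ u x x)| :=
        (neg_le_abs _).trans abs_integral_le_integral_abs
    _ ≤ 2 * ∫ x, ‖x‖ ^ (2 * k + 1) * |u x| * ‖fderiv ℝ u x‖ := by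
        rw [← integral_const_mul]
        refine integral_mono ?_ ?_ fun x =>
          abs_norm_pow_mul_two_mul_mul_apply_le (fderiv ℝ u x) (u x) x (2 * k)
        · exact ((by fun_prop : Continuous _).integrable_of_hasCompactSupport
            (supp (by simp_all))).abs
        · exact (by fun_prop : Continuous _).integrable_of_hasCompactSupport (supp (by simp_all))
    _ ≤ 2 * (∫ x, ‖x‖ ^ (4 * k + 2) * u x ^ 2) ^ ((1:ℝ)/2) *
          (∫ x, ‖fderiv ℝ u x‖ ^ 2) ^ ((1:ℝ)/2) := by
        rw [mul_assoc]
        gcongr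
        refine cauchy_schwarz.trans_eq ?_
        congr 3 with x
        rw [mul_pow, sq_abs, ← pow_mul]
        ring_nf

end

theorem le_two_mul_rpow_mul_rpow_of_sq_le {a b m d : ℝ} (ha : 0 ≤ a) (hm : 0 ≤ m) (hd : 0 ≤ d)
    (hab : a ^ 2 ≤ 2 * b * d) (hbm : b ^ 2 ≤ 2 * m * d) :
    a ≤ 2 * d ^ ((3:ℝ)/4) * m ^ ((1:ℝ)/4) := by
  have hd4 : (d ^ ((3:ℝ)/4)) ^ 4 = d ^ 3 := by
    rw [← Real.rpow_natCast, ← Real.rpow_mul hd]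
    norm_num
  have hm4 : (m ^ ((1:ℝ)/4)) ^ 4 = m := by
    rw [← Real.rpow_natCast, ← Real.rpow_mul hm]
    norm_num
  refine (pow_le_pow_iff_left₀ ha (by positivity) four_ne_zero).1 ?_
  calc a ^ 4 = (a ^ 2) ^ 2 := by ring
    _ ≤ (2 * b * d) ^ 2 := pow_le_pow_left₀ (sq_nonneg a) hab 2
    _ = 4 * d ^ 2 * b ^ 2 := by ring
    _ ≤ 4 * d ^ 2 * (2 * m * d) := by gcongr
    _ ≤ 16 * d ^ 3 * m := by nlinarith [pow_nonneg hd 3]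
    _ = (2 * d ^ ((3:ℝ)/4) * m ^ ((1:ℝ)/4)) ^ 4 := by
        rw [mul_pow, mul_pow, hd4, hm4]
        ring

theorem ckn_k2 (N : ℕ) (hN : 1 ≤ N) :
    ∃ C > 0, ∀ u : EuclideanSpace ℝ (Fin N) → ℝ,
      ContDiff ℝ 1 u → HasCompactSupport u →
      (∫ x, (u x)^2) ^ ((1:ℝ)/2) ≤
        C * ((∫ x, ‖fderiv ℝ u x‖^2) ^ ((1:ℝ)/2)) ^ ((3:ℝ)/4) *
          ((∫ x, ‖x‖^6 * (u x)^2) ^ ((1:ℝ)/2)) ^ ((1:ℝ)/4) := by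
  refine ⟨2, two_pos, fun u hu hcs => ?_⟩
  have h0 := weighted_heisenberg hu hcs 0
  have h1 := weighted_heisenberg hu hcs 1
  norm_num at h0 h1
  have sq_rpow_half {A : ℝ} (hA : 0 ≤ A) : (A ^ ((1:ℝ)/2)) ^ 2 = A := by
    rw [← Real.sqrt_eq_rpow, Real.sq_sqrt hA]
  refine le_two_mul_rpow_mul_rpow_of_sq_le (b := (∫ x, ‖x‖ ^ 2 * u x ^ 2) ^ ((1:ℝ)/2))
    (by positivity) (by positivity) (by positivity) ?_ ?_
  · rw [sq_rpow_half (integral_nonneg fun x => sq_nonneg _)]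
    exact (le_mul_of_one_le_left (integral_nonneg fun x => sq_nonneg _)
      (by exact_mod_cast hN)).trans h0
  · rw [sq_rpow_half (integral_nonneg fun x => by positivity)]
    exact (le_mul_of_one_le_left (integral_nonneg fun x => by positivity) (by linarith)).trans h1
end

section
/- Let N ≥ 1, α ≤ 0, a_0 > 0, δ > 0, and set μ = a_0 / ((2-α)^2 (2+δ)), ⟨x⟩ = √(1+|x|^2), and ψ(t,x) = μ ⟨x⟩^{2-α} / (1+t) for t ≥ 0. Then for all t ≥ 0 and x ∈ ℝ^N, -∂_t ψ(t,x) · a_0 ⟨x⟩^{-α} ≥ (2+δ) |∇_x ψ(t,x)|^2. -/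
/-!
With `C = 1 + ‖x‖²`, `p = (2 - α)/2` and `r = C^{-α/2}`, one computes
`-∂ₜψ = μ C r² / (1+t)²` and `|∇ψ| = |μ/(1+t)| |2-α| r ‖x‖`. The choice of `μ` makes
`(2+δ)(2-α)² μ² = μ a₀`, so the claim reduces to `μ a₀ r² ‖x‖² ≤ μ a₀ r² C`, i.e. `‖x‖² ≤ C`.
-/

theorem deriv_const_div_one_add (c t : ℝ) (ht : 1 + t ≠ 0) :
    deriv (fun s => c / (1 + s)) t = -c / (1 + t) ^ 2 := by
  have h := ((hasDerivAt_id t).const_add 1).inv ht |>.const_mul c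
  simpa [div_eq_mul_inv, neg_div] using h.deriv

section JapaneseBracket

variable {E : Type*} [NormedAddCommGroup E] [InnerProductSpace ℝ E]

theorem hasFDerivAt_one_add_norm_sq_rpow (p : ℝ) (x : E) :
    HasFDerivAt (fun y : E => (1 + ‖y‖ ^ 2) ^ p)
      ((2 * p * (1 + ‖x‖ ^ 2) ^ (p - 1)) • innerSL ℝ x) x := by
  have hsq := (hasStrictFDerivAt_norm_sq x).hasFDerivAt.const_add (1 : ℝ)
  convert hsq.rpow_const (p := p) (Or.inl (by positivity)) using 1
  rw [← Nat.cast_smul_eq_nsmul ℝ, smul_smul]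
  congr 1
  push_cast
  ring

theorem norm_fderiv_const_mul_one_add_norm_sq_rpow (c p : ℝ) (x : E) :
    ‖fderiv ℝ (fun y : E => c * (1 + ‖y‖ ^ 2) ^ p) x‖
      = |c| * |2 * p| * (1 + ‖x‖ ^ 2) ^ (p - 1) * ‖x‖ := by
  rw [((hasFDerivAt_one_add_norm_sq_rpow p x).const_mul c).fderiv, norm_smul, norm_smul,
    innerSL_apply_norm, Real.norm_eq_abs, Real.norm_eq_abs, abs_mul,
    abs_of_pos (by positivity : 0 < (1 + ‖x‖ ^ 2) ^ (p - 1))]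
  ring

end JapaneseBracket

theorem div_sq_mul_self (a D : ℝ) : (a / D) ^ 2 * D = a / D * a := by
  rcases eq_or_ne D 0 with rfl | hD
  · simp
  · field_simp

theorem ity_weight_dissipativity_general (N : ℕ) (α a0 δ : ℝ)
    (hδ : 0 < δ)
    (μ : ℝ) (hμ : μ = a0 / ((2-α)^2 * (2+δ)))
    (ψ : ℝ → EuclideanSpace ℝ (Fin N) → ℝ)
    (hψ : ∀ t x, ψ t x = μ * (1+‖x‖^2) ^ ((2-α)/2) / (1+t)) :
    ∀ t ≥ (0:ℝ), ∀ x : EuclideanSpace ℝ (Fin N),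
      -(deriv (fun s => ψ s x) t) * (a0 * (1+‖x‖^2) ^ (-α/2))
        ≥ (2+δ) * ‖fderiv ℝ (ψ t) x‖^2 := by
  intro t ht x
  obtain rfl : ψ = fun t x => μ * (1 + ‖x‖ ^ 2) ^ ((2 - α) / 2) / (1 + t) := funext₂ hψ
  have hspace : ‖fderiv ℝ (fun y => μ * (1 + ‖y‖ ^ 2) ^ ((2 - α) / 2) / (1 + t)) x‖
      = |μ / (1 + t)| * |2 - α| * (1 + ‖x‖ ^ 2) ^ (-α / 2) * ‖x‖ := by
    simp_rw [mul_div_right_comm μ]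
    rw [norm_fderiv_const_mul_one_add_norm_sq_rpow, show (2 - α) / 2 - 1 = -α / 2 by ring,
      show 2 * ((2 - α) / 2) = 2 - α by ring]
  rw [deriv_const_div_one_add _ t (by linarith), hspace, ge_iff_le]
  set C := 1 + ‖x‖ ^ 2
  set r := C ^ (-α / 2)
  have hC : C ^ ((2 - α) / 2) = C * r := by
    rw [show (2 - α) / 2 = 1 + -α / 2 by ring, Real.rpow_add (by positivity), Real.rpow_one]
  have hμa : 0 ≤ μ * a0 := by
    rw [hμ, div_mul_eq_mul_div]
    exact div_nonneg (mul_self_nonneg a0) (by positivity)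
  calc (2 + δ) * (|μ / (1 + t)| * |2 - α| * r * ‖x‖) ^ 2
      = μ ^ 2 * ((2 - α) ^ 2 * (2 + δ)) * r ^ 2 * ‖x‖ ^ 2 / (1 + t) ^ 2 := by
        simp only [mul_pow, sq_abs, div_pow]; ring
    _ = μ * a0 * r ^ 2 * ‖x‖ ^ 2 / (1 + t) ^ 2 := by rw [hμ, div_sq_mul_self]
    _ ≤ μ * a0 * r ^ 2 * C / (1 + t) ^ 2 := by gcongr; linarith
    _ = -(-(μ * C ^ ((2 - α) / 2)) / (1 + t) ^ 2) * (a0 * r) := by rw [hC]; ring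

theorem ity_weight_dissipativity (N : ℕ) (hN : 1 ≤ N) (α a0 δ : ℝ)
    (hα : α ≤ 0) (ha0 : 0 < a0) (hδ : 0 < δ)
    (μ : ℝ) (hμ : μ = a0 / ((2-α)^2 * (2+δ)))
    (ψ : ℝ → EuclideanSpace ℝ (Fin N) → ℝ)
    (hψ : ∀ t x, ψ t x = μ * (1+‖x‖^2) ^ ((2-α)/2) / (1+t)) :
    ∀ t ≥ (0:ℝ), ∀ x : EuclideanSpace ℝ (Fin N),
      -(deriv (fun s => ψ s x) t) * (a0 * (1+‖x‖^2) ^ (-α/2))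
        ≥ (2+δ) * ‖fderiv ℝ (ψ t) x‖^2 :=
  ity_weight_dissipativity_general N α a0 δ hδ μ hμ ψ hψ
end

section
/- Let N ≥ 1, α < 0, p > 1 + 2/(N-α), and let δ₀ satisfy 0 < δ₀ < (2/(2-α))(N-α - 2/(p-1)). Let k be a positive integer with 2^k - 1 ≥ -α/2, and set θ = N(p-1)/(2(p+1)). Then the real number E := (N-α)/(2-α) + 1 - δ₀ + (p+1)[ -(1/2)((N-α)/(2-α) + 1 - δ₀)(θ + (1 - 1/2^k)(1-θ)) + ((2^k - 1 + α/2)/(2-α) - (1/2)((N-α)/(2-α) - δ₀))·(1-θ)/2^k ] is strictly negative. Moreover E < 0 holds if and only if p > 1 + 2/(N - α - (2-α)δ₀/2). -/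
theorem exponent_negativity (N : ℕ) (hN : 1 ≤ N) (α p δ₀ : ℝ) (k : ℕ)
    (hα : α < 0) (hp : p > 1 + 2/((N:ℝ)-α)) (hδ₀ : 0 < δ₀)
    (hδ₀' : δ₀ < (2/(2-α))*((N:ℝ)-α-2/(p-1)))
    (hk : 1 ≤ k) (hk2 : (2:ℝ)^k - 1 ≥ -α/2)
    (θ : ℝ) (hθ : θ = (N:ℝ)*(p-1)/(2*(p+1)))
    (E : ℝ)
    (hE : E = ((N:ℝ)-α)/(2-α) + 1 - δ₀ +
      (p+1)*( -(1/2)*(((N:ℝ)-α)/(2-α)+1-δ₀)*(θ + (1-1/(2:ℝ)^k)*(1-θ))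
        + (((2:ℝ)^k - 1 + α/2)/(2-α) - (1/2)*(((N:ℝ)-α)/(2-α) - δ₀))*((1-θ)/(2:ℝ)^k) )) :
    E < 0 ∧ (E < 0 ↔ p > 1 + 2/((N:ℝ) - α - (2-α)*δ₀/2)) := by
  have hNα : (0:ℝ) < (N:ℝ) - α := by
    have : (1:ℝ) ≤ (N:ℝ) := by exact_mod_cast hN
    linarith
  have h2α : (0:ℝ) < 2 - α := by linarith
  have hp1 : 1 < p := by
    have : 0 < 2/((N:ℝ)-α) := by positivity
    linarith
  have hK : (0:ℝ) < (2:ℝ)^k := by positivity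
  -- closed form for E
  have hE2 : E = (4 - (p-1)*(2*((N:ℝ)-α) - (2-α)*δ₀)) / (2*(2-α)) := by
    rw [hE, hθ]
    field_simp
    ring
  -- key inequality from hδ₀'
  have h1 : (2-α)*δ₀ < 2*((N:ℝ)-α) - 4/(p-1) := by
    have := mul_lt_mul_of_pos_left hδ₀' h2α
    have h2 : (2-α) * ((2/(2-α))*((N:ℝ)-α-2/(p-1))) = 2*((N:ℝ)-α) - 4/(p-1) := by
      field_simp
      ring
    linarith [this, h2.symm ▸ this]
  have hp1' : (0:ℝ) < p - 1 := by linarith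
  have key : 4 < (p-1)*(2*((N:ℝ)-α) - (2-α)*δ₀) := by
    have h4 : (p-1) * (4/(p-1)) = 4 := by field_simp
    nlinarith [mul_lt_mul_of_pos_left h1 hp1']
  have hEneg : E < 0 := by
    rw [hE2]
    apply div_neg_of_neg_of_pos
    · linarith
    · linarith
  refine ⟨hEneg, ?_, fun _ => hEneg⟩
  intro _
  have hD : 0 < (N:ℝ) - α - (2-α)*δ₀/2 := by
    have : 0 < 4/(p-1) := by positivity
    linarith
  have h5 : 2 < (p-1)*((N:ℝ) - α - (2-α)*δ₀/2) := by nlinarith [key]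
  have h6 : 2/((N:ℝ) - α - (2-α)*δ₀/2) < p - 1 := (div_lt_iff₀ hD).mpr (by linarith)
  linarith
end
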